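/- The group G = ⟨x₀, x₁, x₂, x₃ | x₀x₁x₀⁻¹ = x₁⁻², x₁x₂x₁⁻¹ = x₂⁻², x₂x₃x₂⁻¹ = x₃⁻², x₃x₀x₃⁻¹ = x₀⁻²⟩ is not left-orderable. -/
import Mathlib


/-- The relators `xᵢ x_{i+1} xᵢ⁻¹ x_{i+1}²` (indices mod 4) of the group
`G = ⟨x₀,…,x₃ ∣ xᵢ x_{i+1} xᵢ⁻¹ = x_{i+1}⁻²⟩`. -/
def higmanLikeRels : Set (FreeGroup (ZMod 4)) :=
  {r | ∃ i : ZMod 4,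
    r = FreeGroup.of i * FreeGroup.of (i + 1) * (FreeGroup.of i)⁻¹ *
        (FreeGroup.of (i + 1)) ^ 2}

/-- The group `⟨x₀, x₁, x₂, x₃ ∣ x₀x₁x₀⁻¹ = x₁⁻², x₁x₂x₁⁻¹ = x₂⁻², x₂x₃x₂⁻¹ = x₃⁻²,
x₃x₀x₃⁻¹ = x₀⁻²⟩`. -/
abbrev HigmanLikeGroup : Type := PresentedGroup higmanLikeRels

/-- A group is left-orderable if it admits a total order invariant under left
multiplication. -/
def LeftOrderable (G : Type*) [Group G] : Prop :=
  ∃ r : G → G → Prop, IsStrictTotalOrder G r ∧ ∀ g x y : G, r x y → r (g * x) (g * y)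

section Aux

variable {G : Type*} [Group G] {r : G → G → Prop}

/-- Key lemma, positive case: if `a b a⁻¹ = b⁻²` and `1 < b` in a left order, then
`b < a` or `b < a⁻¹`. -/
private lemma higman_key_pos
    (htr : ∀ a b c : G, r a b → r b c → r a c)
    (hir : ∀ g : G, ¬ r g g)
    (htri : ∀ a b : G, r a b ∨ a = b ∨ r b a)
    (hinv : ∀ g x y : G, r x y → r (g * x) (g * y))
    {a b : G} (hrel : a * b = b⁻¹ * b⁻¹ * a) (hb : r 1 b) :
    r b a ∨ r b a⁻¹ := by
  by_contra hc
  push_neg at hc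
  obtain ⟨h1, h2⟩ := hc
  -- b⁻¹ < 1
  have hbinv : r b⁻¹ 1 := by
    have := hinv b⁻¹ 1 b hb
    simpa using this
  -- a ≤ b and a⁻¹ ≤ b
  have ha : r a b ∨ a = b := by
    rcases htri a b with h | h | h
    · exact Or.inl h
    · exact Or.inr h
    · exact absurd h h1
  have ha' : r a⁻¹ b ∨ a⁻¹ = b := by
    rcases htri a⁻¹ b with h | h | h
    · exact Or.inl h
    · exact Or.inr h
    · exact absurd h h2
  -- 1 ≤ a * b
  have f2 : r 1 (a * b) ∨ a * b = 1 := by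
    rcases ha' with h | h
    · left
      have := hinv a a⁻¹ b h
      simpa using this
    · right
      rw [← h]
      simp
  -- a * b ≤ b⁻¹  (since a * b = b⁻² * a ≤ b⁻² * b = b⁻¹)
  have f1 : r (a * b) b⁻¹ ∨ a * b = b⁻¹ := by
    rcases ha with h | h
    · left
      have := hinv (b⁻¹ * b⁻¹) a b h
      rw [← hrel] at this
      simpa [mul_assoc] using this
    · right
      rw [hrel, h]
      group
  -- combine : 1 ≤ a*b ≤ b⁻¹ < 1
  have hcontr : r 1 1 := by
    rcases f2 with h2' | h2' <;> rcases f1 with h1' | h1'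
    · exact htr _ _ _ (htr _ _ _ h2' h1') hbinv
    · exact htr _ _ _ h2' (h1' ▸ hbinv)
    · rw [h2'] at h1'; exact htr _ _ _ h1' hbinv
    · exfalso
      have : b = 1 := by
        have : (1 : G) = b⁻¹ := h2' ▸ h1'
        simpa using this.symm
      rw [this] at hb
      exact hir 1 hb
  exact hir 1 hcontr

/-- `|a| > |b|` : both `b` and `b⁻¹` are below `a`, or both are below `a⁻¹`. -/
private def HigmanGT (r : G → G → Prop) (a b : G) : Prop :=
  (r b a ∧ r b⁻¹ a) ∨ (r b a⁻¹ ∧ r b⁻¹ a⁻¹)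

private lemma higman_key
    (htr : ∀ a b c : G, r a b → r b c → r a c)
    (hir : ∀ g : G, ¬ r g g)
    (htri : ∀ a b : G, r a b ∨ a = b ∨ r b a)
    (hinv : ∀ g x y : G, r x y → r (g * x) (g * y))
    {a b : G} (hrel : a * b * a⁻¹ = b⁻¹ * b⁻¹) (hb : b ≠ 1) :
    HigmanGT r a b := by
  have hrel' : a * b = b⁻¹ * b⁻¹ * a := by
    have := congrArg (· * a) hrel
    simpa [mul_assoc] using this
  have hconj : a * b⁻¹ * a⁻¹ = b * b := by
    have h := congrArg Inv.inv hrel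
    simp only [mul_inv_rev, inv_inv] at h
    rw [← mul_assoc] at h
    exact h
  have hrelinv : a * b⁻¹ = b * b * a := by
    have h := congrArg (· * a) hconj
    simpa [mul_assoc] using h
  rcases htri 1 b with hpos | h1 | hneg
  · -- 1 < b
    have h := higman_key_pos (r := r) htr hir htri hinv hrel' hpos
    have hb' : r b⁻¹ b := by
      have h1 : r b⁻¹ 1 := by simpa using hinv b⁻¹ 1 b hpos
      exact htr _ _ _ h1 hpos
    rcases h with h | h
    · exact Or.inl ⟨h, htr _ _ _ hb' h⟩
    · exact Or.inr ⟨h, htr _ _ _ hb' h⟩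
  · exact absurd h1.symm hb
  · -- b < 1, so 1 < b⁻¹; apply the positive case to b⁻¹
    have hpos : r 1 b⁻¹ := by simpa using hinv b⁻¹ b 1 hneg
    have hrel'' : a * b⁻¹ = (b⁻¹)⁻¹ * (b⁻¹)⁻¹ * a := by simpa using hrelinv
    have h := higman_key_pos (r := r) htr hir htri hinv hrel'' hpos
    have hb' : r b b⁻¹ := htr _ _ _ hneg hpos
    rcases h with h | h
    · exact Or.inl ⟨htr _ _ _ hb' h, h⟩
    · exact Or.inr ⟨htr _ _ _ hb' h, h⟩

private lemma higmanGT_trans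
    (htr : ∀ a b c : G, r a b → r b c → r a c)
    {a b c : G} (h1 : HigmanGT r a b) (h2 : HigmanGT r b c) : HigmanGT r a c := by
  rcases h1 with ⟨hba, hba'⟩ | ⟨hba, hba'⟩ <;>
    rcases h2 with ⟨hcb, hcb'⟩ | ⟨hcb, hcb'⟩
  · exact Or.inl ⟨htr _ _ _ hcb hba, htr _ _ _ hcb' hba⟩
  · exact Or.inl ⟨htr _ _ _ hcb hba', htr _ _ _ hcb' hba'⟩
  · exact Or.inr ⟨htr _ _ _ hcb hba, htr _ _ _ hcb' hba⟩
  · exact Or.inr ⟨htr _ _ _ hcb hba', htr _ _ _ hcb' hba'⟩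

private lemma higmanGT_irrefl (hir : ∀ g : G, ¬ r g g) (a : G) : ¬ HigmanGT r a a := by
  rintro (⟨h, -⟩ | ⟨-, h⟩) <;> exact hir _ h

end Aux

/-- The image of each generator under the map to `(ℤ/3)⁴` (abelianization) is nontrivial,
hence the generators of `HigmanLikeGroup` are nontrivial. -/
private lemma higmanLike_of_ne_one (i : ZMod 4) :
    (PresentedGroup.of i : HigmanLikeGroup) ≠ 1 := by
  classical
  let f : ZMod 4 → (ZMod 4 → Multiplicative (ZMod 3)) :=
    fun i => Pi.mulSingle i (Multiplicative.ofAdd 1)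
  have hf : ∀ r ∈ higmanLikeRels, FreeGroup.lift f r = 1 := by
    rintro _ ⟨j, rfl⟩
    simp only [map_mul, map_inv, map_pow, FreeGroup.lift_apply_of]
    have hcomm : ∀ u v : ZMod 4 → Multiplicative (ZMod 3),
        u * v * u⁻¹ * v ^ 2 = v ^ 3 := by
      intro u v
      rw [mul_comm u v]
      group
    rw [hcomm]
    funext k
    by_cases hk : j + 1 = k
    · subst hk
      simp [f, Pi.mulSingle]
      decide
    · simp [f, Pi.mulSingle_apply, hk]
  intro h
  have := congrArg (PresentedGroup.toGroup hf) h
  rw [PresentedGroup.toGroup.of, map_one] at this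
  have := congrFun this i
  simp [f, Pi.mulSingle_apply] at this

private lemma higmanLike_rel (i : ZMod 4) :
    (PresentedGroup.of i : HigmanLikeGroup) * PresentedGroup.of (i + 1) *
      (PresentedGroup.of i)⁻¹ =
    (PresentedGroup.of (i + 1))⁻¹ * (PresentedGroup.of (i + 1))⁻¹ := by
  have hmem : (FreeGroup.of i * FreeGroup.of (i + 1) * (FreeGroup.of i)⁻¹ *
      (FreeGroup.of (i + 1)) ^ 2) ∈ Subgroup.normalClosure higmanLikeRels :=
    Subgroup.subset_normalClosure ⟨i, rfl⟩
  have h1 : (PresentedGroup.mk higmanLikeRels) (FreeGroup.of i * FreeGroup.of (i + 1) *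
      (FreeGroup.of i)⁻¹ * (FreeGroup.of (i + 1)) ^ 2) = 1 :=
    (QuotientGroup.eq_one_iff _).mpr hmem
  rw [map_mul, map_mul, map_mul, map_inv, map_pow] at h1
  have h2 := mul_eq_one_iff_eq_inv.mp h1
  rw [pow_two, mul_inv_rev] at h2
  exact h2

/-- The group `⟨x₀,…,x₃ ∣ xᵢ x_{i+1} xᵢ⁻¹ = x_{i+1}⁻²⟩` (indices mod 4) is not
left-orderable. -/
theorem higmanLikeGroup_not_leftOrderable : ¬ LeftOrderable HigmanLikeGroup := by
  rintro ⟨r, hsto, hinv⟩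
  haveI := hsto
  have htr : ∀ a b c : HigmanLikeGroup, r a b → r b c → r a c :=
    fun _ _ _ h1 h2 => trans_of r h1 h2
  have hir : ∀ g : HigmanLikeGroup, ¬ r g g := fun g => irrefl_of r g
  have htri : ∀ a b : HigmanLikeGroup, r a b ∨ a = b ∨ r b a :=
    fun a b => trichotomous_of r a b
  set x : ZMod 4 → HigmanLikeGroup := fun i => PresentedGroup.of i with hx
  have key : ∀ i : ZMod 4, HigmanGT r (x i) (x (i + 1)) := fun i =>
    higman_key (r := r) htr hir htri hinv (higmanLike_rel i) (higmanLike_of_ne_one (i + 1))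
  have h01 := key 0
  have h12 := key 1
  have h23 := key 2
  have h30 := key 3
  have e1 : ((0 : ZMod 4) + 1) = 1 := by decide
  have e2 : ((1 : ZMod 4) + 1) = 2 := by decide
  have e3 : ((2 : ZMod 4) + 1) = 3 := by decide
  have e4 : ((3 : ZMod 4) + 1) = 0 := by decide
  rw [e1] at h01; rw [e2] at h12; rw [e3] at h23; rw [e4] at h30
  exact higmanGT_irrefl (r := r) hir (x 0)
    (higmanGT_trans (r := r) htr (higmanGT_trans (r := r) htr (higmanGT_trans (r := r) htr h01 h12) h23) h30)
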